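/- arXiv:2511.04982 — 5 statements merged into one kernel-verified Lean document; each statement's English description precedes it below -/
import Mathlib

section
/- Fix integers Δ ≥ 1, q, and s with Δ < s < q. Suppose a probability distribution (r_k)_{k=1}^{Δ} on {1,…,Δ} is realized as the law of |L_U| for a grand coupling, meaning: there is a probability space with a random set L_U ⊆ [q] of size at most Δ such that L_U ∩ ([q]∖S) ≠ ∅ always holds (where S ⊆ [q] has |S| = s), and for every j-element subset C of S with 1 ≤ j ≤ Δ, conditionally the event 'output lies in [q]∖S' has probability exactly (q−s)/(q−j) and is implied by 'L_U ∩ S ⊆ C'. Then for every 1 ≤ j ≤ Δ: Σ_{k=1}^{Δ} r_k · (j choose (k−1))/(s choose (k−1)) ≤ (q−s)/(q−j). -/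
/-!
If `|L| = k`, then `L ∩ S` has at most `k - 1` elements because `L` meets the complement of `S`.
For a uniformly random `j`-subset `C` of `S` the hypergeometric bound then gives
`Pr[L ∩ S ⊆ C] ≥ C(j, k-1) / C(s, k-1)`. Averaging the hypothesis
`μ {L ∩ S ⊆ C} ≤ (q - s) / (q - j)` over `C` and exchanging this average with the expectation
over `L` yields the constraint.
-/

open MeasureTheory Finset

theorem Nat.choose_mul_choose_le_choose_mul_choose {j s m n : ℕ} (hjs : j ≤ s) (hmn : m ≤ n) :
    j.choose n * s.choose m ≤ j.choose m * s.choose n := by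
  induction n, hmn using Nat.le_induction with
  | base => exact le_rfl
  | succ n hmn ih =>
    have hj : j.choose (n + 1) * s.choose m * (n + 1) = j.choose n * s.choose m * (j - n) := by
      rw [mul_right_comm, Nat.choose_succ_right_eq, mul_right_comm]
    have hs : j.choose m * s.choose (n + 1) * (n + 1) = j.choose m * s.choose n * (s - n) := by
      rw [mul_assoc, Nat.choose_succ_right_eq, ← mul_assoc]
    refine Nat.le_of_mul_le_mul_right ?_ n.succ_pos
    rw [hj, hs]
    exact Nat.mul_le_mul ih (Nat.sub_le_sub_right hjs n)

/-- Cross-multiplied form of `Pr[M ⊆ C] = C(j, #M) / C(#S, #M) ≥ C(j, n) / C(#S, n)` for a uniformly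
random `j`-subset `C` of `S`. -/
theorem Finset.choose_mul_choose_le_card_filter_powersetCard_subset {α : Type*} [DecidableEq α]
    {M S : Finset α} {j n : ℕ} (hMS : M ⊆ S) (hMn : #M ≤ n) (hjS : j ≤ #S) :
    j.choose n * (#S).choose j ≤ #((S.powersetCard j).filter (M ⊆ ·)) * (#S).choose n := by
  by_cases hMj : #M ≤ j
  · rw [card_filter_powersetCard_subset M S j hMS hMj]
    refine Nat.le_of_mul_le_mul_right ?_ (Nat.choose_pos (hMj.trans hjS))
    calc j.choose n * (#S).choose j * (#S).choose #M
        = j.choose n * (#S).choose #M * (#S).choose j := by ring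
      _ ≤ j.choose #M * (#S).choose n * (#S).choose j :=
          Nat.mul_le_mul_right _ (Nat.choose_mul_choose_le_choose_mul_choose hjS hMn)
      _ = (#S).choose j * j.choose #M * (#S).choose n := by ring
      _ = (#S).choose #M * (#S - #M).choose (j - #M) * (#S).choose n := by
          rw [Nat.choose_mul hMj]
      _ = (#S - #M).choose (j - #M) * (#S).choose n * (#S).choose #M := by ring
  · simp [Nat.choose_eq_zero_of_lt (by omega : j < n)]

theorem Finset.choose_div_choose_le_card_filter_powersetCard_div {α : Type*} [DecidableEq α]
    {S T : Finset α} {j : ℕ} (hTS : ¬ T ⊆ S) (hTcard : #T ≤ #S) (hjS : j ≤ #S) :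
    (j.choose (#T - 1) : ℝ) / (#S).choose (#T - 1)
      ≤ #((S.powersetCard j).filter (T ∩ S ⊆ ·)) / (#S).choose j := by
  have hlt : #(T ∩ S) < #T :=
    card_lt_card ⟨inter_subset_left, fun h => hTS fun _ hx => (mem_inter.1 (h hx)).2⟩
  rw [div_le_div_iff₀ (by exact_mod_cast Nat.choose_pos (by omega))
    (by exact_mod_cast Nat.choose_pos hjS)]
  exact_mod_cast choose_mul_choose_le_card_filter_powersetCard_subset inter_subset_right
    (by omega) hjS

theorem MeasureTheory.measurableSet_preimage_of_countable {Ω α : Type*} [MeasurableSpace Ω]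
    [Countable α] {L : Ω → α} (hL : ∀ T, MeasurableSet {ω | L ω = T}) (Q : Set α) :
    MeasurableSet (L ⁻¹' Q) := by
  have : L ⁻¹' Q = ⋃ T ∈ Q, {ω | L ω = T} := by ext; simp
  rw [this]
  exact MeasurableSet.biUnion Q.to_countable fun T _ => hL T

theorem MeasureTheory.integral_finsetSum_indicator_const {Ω ι : Type*} [MeasurableSpace Ω]
    (μ : Measure Ω) [IsFiniteMeasure μ] {s : Finset ι} {A : ι → Set Ω}
    (hA : ∀ i ∈ s, MeasurableSet (A i)) (a : ι → ℝ) :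
    ∫ ω, ∑ i ∈ s, (A i).indicator (fun _ => a i) ω ∂μ = ∑ i ∈ s, a i * μ.real (A i) := by
  rw [integral_finsetSum _ fun i hi => (integrable_const (a i)).indicator (hA i hi)]
  refine sum_congr rfl fun i hi => ?_
  rw [integral_indicator_const _ (hA i hi), smul_eq_mul, mul_comm]

theorem MeasureTheory.sum_mul_measureReal_le_of_sum_indicator_le {Ω ι κ : Type*}
    [MeasurableSpace Ω] (μ : Measure Ω) [IsFiniteMeasure μ] {s : Finset ι} {t : Finset κ}
    {A : ι → Set Ω} {B : κ → Set Ω} (hA : ∀ i ∈ s, MeasurableSet (A i))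
    (hB : ∀ l ∈ t, MeasurableSet (B l)) (a : ι → ℝ) (b : κ → ℝ)
    (h : ∀ ω, ∑ i ∈ s, (A i).indicator (fun _ => a i) ω
      ≤ ∑ l ∈ t, (B l).indicator (fun _ => b l) ω) :
    ∑ i ∈ s, a i * μ.real (A i) ≤ ∑ l ∈ t, b l * μ.real (B l) := by
  rw [← integral_finsetSum_indicator_const μ hA, ← integral_finsetSum_indicator_const μ hB]
  exact integral_mono
    (integrable_finsetSum _ fun i hi => (integrable_const (a i)).indicator (hA i hi))
    (integrable_finsetSum _ fun l hl => (integrable_const (b l)).indicator (hB l hl)) h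

theorem sum_indicator_choose_div_choose_le {Ω α : Type*} [DecidableEq α] {S : Finset α}
    {L : Ω → Finset α} {Δ j : ℕ} (hLS : ∀ ω, ¬ L ω ⊆ S) (hLΔ : ∀ ω, #(L ω) ≤ Δ) (hΔS : Δ ≤ #S)
    (hjS : j ≤ #S) (ω : Ω) :
    ∑ k ∈ Icc 1 Δ, {ω | #(L ω) = k}.indicator
        (fun _ => (j.choose (k - 1) : ℝ) / (#S).choose (k - 1)) ω
      ≤ ∑ C ∈ S.powersetCard j, {ω | L ω ∩ S ⊆ C}.indicator
        (fun _ => 1 / ((#S).choose j : ℝ)) ω := by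
  have hcard : #(L ω) ∈ Icc 1 Δ :=
    mem_Icc.2 ⟨card_pos.2 ((not_subset.1 (hLS ω)).imp fun _ hx => hx.1), hLΔ ω⟩
  simp only [Set.indicator_apply, Set.mem_ofPred_eq]
  rw [sum_ite_eq, if_pos hcard, ← sum_filter, sum_const, nsmul_eq_mul, ← div_eq_mul_one_div]
  exact choose_div_choose_le_card_filter_powersetCard_div (hLS ω) ((hLΔ ω).trans hΔS) hjS

theorem stmt_4_general {Ω : Type*} [MeasurableSpace Ω] (μ : Measure Ω) [IsProbabilityMeasure μ]
    (q s Δ : ℕ) (hΔs : Δ < s)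
    (S : Finset ℕ) (hScard : S.card = s)
    (L : Ω → Finset ℕ)
    (hLmeas : ∀ T : Finset ℕ, MeasurableSet {ω | L ω = T})
    (hLΔ : ∀ ω, (L ω).card ≤ Δ)
    (hLout : ∀ ω, ¬ (L ω ⊆ S))
    (r : ℕ → ℝ) (hr : ∀ k, r k = (μ {ω | (L ω).card = k}).toReal)
    (hmarg : ∀ j, 1 ≤ j → j ≤ Δ → ∀ C ⊆ S, C.card = j →
      ∃ E : Set Ω, MeasurableSet E ∧ (μ E).toReal = ((q : ℝ) - s) / ((q : ℝ) - j) ∧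
        {ω | L ω ∩ S ⊆ C} ⊆ E) :
    ∀ j, 1 ≤ j → j ≤ Δ →
      ∑ k ∈ Finset.Icc 1 Δ,
          r k * (Nat.choose j (k - 1) : ℝ) / (Nat.choose s (k - 1) : ℝ)
        ≤ ((q : ℝ) - s) / ((q : ℝ) - j) := by
  intro j hj1 hjΔ
  subst hScard
  have hjS : j ≤ #S := by omega
  have hmeas (Q : Set (Finset ℕ)) : MeasurableSet (L ⁻¹' Q) :=
    measurableSet_preimage_of_countable hLmeas Q
  calc ∑ k ∈ Icc 1 Δ, r k * (j.choose (k - 1) : ℝ) / ((#S).choose (k - 1) : ℝ)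
      = ∑ k ∈ Icc 1 Δ,
          (j.choose (k - 1) : ℝ) / (#S).choose (k - 1) * μ.real {ω | #(L ω) = k} := by
        refine sum_congr rfl fun k _ => ?_
        rw [hr k, measureReal_def]
        ring
    _ ≤ ∑ C ∈ S.powersetCard j, 1 / ((#S).choose j : ℝ) * μ.real {ω | L ω ∩ S ⊆ C} :=
        sum_mul_measureReal_le_of_sum_indicator_le μ (fun k _ => hmeas {T | #T = k})
          (fun C _ => hmeas {T | T ∩ S ⊆ C}) _ _
          (sum_indicator_choose_div_choose_le hLout hLΔ hΔs.le hjS)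
    _ ≤ ∑ C ∈ S.powersetCard j, 1 / ((#S).choose j : ℝ) * (((q : ℝ) - #S) / ((q : ℝ) - j)) := by
        gcongr with C hC
        obtain ⟨E, -, hEμ, hLE⟩ := hmarg j hj1 hjΔ C (mem_powersetCard.1 hC).1
          (mem_powersetCard.1 hC).2
        rw [← hEμ, ← measureReal_def]
        exact measureReal_mono hLE
    _ = ((q : ℝ) - #S) / ((q : ℝ) - j) := by
        have : ((#S).choose j : ℝ) ≠ 0 := by exact_mod_cast (Nat.choose_pos hjS).ne'
        rw [sum_const, card_powersetCard, nsmul_eq_mul]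
        field_simp

/-- Necessity direction of the LP characterization of grand couplings.
`L` is a random subset of `[q]` of size at most `Δ`, always meeting `[q] ∖ S`
(`S ⊆ [q]`, `|S| = s`), `r k = Pr[|L| = k]`, and for every `j`-subset `C` of `S`
(`1 ≤ j ≤ Δ`) there is an event of probability exactly `(q−s)/(q−j)` implied by
`L ∩ S ⊆ C`. Then the linear constraints hold for all `1 ≤ j ≤ Δ`. -/
theorem stmt_4 {Ω : Type*} [MeasurableSpace Ω] (μ : Measure Ω) [IsProbabilityMeasure μ]
    (q s Δ : ℕ) (hΔ : 1 ≤ Δ) (hΔs : Δ < s) (hsq : s < q)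
    (S : Finset ℕ) (hSq : S ⊆ Finset.Icc 1 q) (hScard : S.card = s)
    (L : Ω → Finset ℕ) (hLq : ∀ ω, L ω ⊆ Finset.Icc 1 q)
    (hLmeas : ∀ T : Finset ℕ, MeasurableSet {ω | L ω = T})
    (hLΔ : ∀ ω, (L ω).card ≤ Δ)
    (hLout : ∀ ω, ¬ (L ω ⊆ S))
    (r : ℕ → ℝ) (hr : ∀ k, r k = (μ {ω | (L ω).card = k}).toReal)
    (hmarg : ∀ j, 1 ≤ j → j ≤ Δ → ∀ C ⊆ S, C.card = j →
      ∃ E : Set Ω, MeasurableSet E ∧ (μ E).toReal = ((q : ℝ) - s) / ((q : ℝ) - j) ∧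
        {ω | L ω ∩ S ⊆ C} ⊆ E) :
    ∀ j, 1 ≤ j → j ≤ Δ →
      ∑ k ∈ Finset.Icc 1 Δ,
          r k * (Nat.choose j (k - 1) : ℝ) / (Nat.choose s (k - 1) : ℝ)
        ≤ ((q : ℝ) - s) / ((q : ℝ) - j) :=
  stmt_4_general μ q s Δ hΔs S hScard L hLmeas hLΔ hLout r hr hmarg
end

section
/- Fix integers Δ ≥ 1 and s > Δ. Define z(k) = (Δ choose (k−1)) / (s choose (k−1)) for k = 1,…,Δ. Then z is strictly decreasing in k, and z is convex as a function of k, i.e., z(k−1) + z(k+1) ≥ 2 z(k) for 2 ≤ k ≤ Δ−1. -/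
/-- The function `z(k) = (Δ choose (k−1)) / (s choose (k−1))`. -/
noncomputable def zfun (Δ s k : ℕ) : ℝ :=
  (Nat.choose Δ (k - 1) : ℝ) / (Nat.choose s (k - 1) : ℝ)

lemma wpos {Δ s m : ℕ} (h1 : m ≤ Δ) (h2 : Δ ≤ s) :
    0 < (Nat.choose Δ m : ℝ) / (Nat.choose s m : ℝ) :=
  div_pos (by exact_mod_cast Nat.choose_pos h1)
    (by exact_mod_cast Nat.choose_pos (h1.trans h2))

lemma wratio (Δ s m : ℕ) (hm : m < Δ) (hs : Δ < s) :
    (Nat.choose Δ (m + 1) : ℝ) / (Nat.choose s (m + 1) : ℝ) =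
      ((Nat.choose Δ m : ℝ) / (Nat.choose s m : ℝ)) *
        (((Δ : ℝ) - m) / ((s : ℝ) - m)) := by
  have h1 : (Nat.choose Δ (m + 1)) * (m + 1) = Nat.choose Δ m * (Δ - m) :=
    Nat.choose_succ_right_eq Δ m
  have h2 : (Nat.choose s (m + 1)) * (m + 1) = Nat.choose s m * (s - m) :=
    Nat.choose_succ_right_eq s m
  have e1 : (Nat.choose Δ (m + 1) : ℝ) * (m + 1) = Nat.choose Δ m * ((Δ : ℝ) - m) := by
    have := congrArg (Nat.cast (R := ℝ)) h1
    push_cast [Nat.cast_sub hm.le] at this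
    linarith [this]
  have e2 : (Nat.choose s (m + 1) : ℝ) * (m + 1) = Nat.choose s m * ((s : ℝ) - m) := by
    have := congrArg (Nat.cast (R := ℝ)) h2
    push_cast [Nat.cast_sub (hm.trans hs).le] at this
    linarith [this]
  have hsm : (0:ℝ) < (s : ℝ) - m := by
    have : (m:ℝ) < s := by exact_mod_cast hm.trans hs
    linarith
  have hcs : (0:ℝ) < (Nat.choose s m : ℝ) := by
    exact_mod_cast Nat.choose_pos (hm.trans hs).le
  have hcs1 : (0:ℝ) < (Nat.choose s (m+1) : ℝ) := by
    exact_mod_cast Nat.choose_pos (Nat.succ_le_of_lt (hm.trans hs))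
  have hm1 : (0:ℝ) < (m:ℝ) + 1 := by positivity
  field_simp
  nlinarith [e1, e2, mul_pos hcs hsm]

/-- For `Δ ≥ 1` and `s > Δ`, the function `z(k) = C(Δ,k−1)/C(s,k−1)` is
strictly decreasing on `{1,…,Δ}` and convex: `z(k−1) + z(k+1) ≥ 2 z(k)` for
`2 ≤ k ≤ Δ−1`. -/
theorem stmt_5 (Δ s : ℕ) (hΔ : 1 ≤ Δ) (hs : Δ < s) :
    (∀ k : ℕ, 1 ≤ k → k + 1 ≤ Δ → zfun Δ s (k + 1) < zfun Δ s k) ∧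
    (∀ k : ℕ, 2 ≤ k → k ≤ Δ - 1 → 2 * zfun Δ s k ≤ zfun Δ s (k - 1) + zfun Δ s (k + 1)) := by
  constructor
  · intro k hk1 hkΔ
    obtain ⟨m, rfl⟩ : ∃ m, k = m + 1 := ⟨k - 1, by omega⟩
    have hm : m + 1 < Δ := by omega
    have hind1 : (m + 1 + 1) - 1 = m + 1 := by omega
    have hind2 : (m + 1) - 1 = m := by omega
    unfold zfun
    rw [hind1, hind2, wratio Δ s m (by omega) hs]
    have hw : 0 < (Nat.choose Δ m : ℝ) / (Nat.choose s m : ℝ) :=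
      wpos (by omega) hs.le
    have hsm : (0:ℝ) < (s : ℝ) - m := by
      have : (m:ℝ) < s := by exact_mod_cast lt_trans (by omega) hs
      linarith
    have hratio : ((Δ : ℝ) - m) / ((s : ℝ) - m) < 1 := by
      rw [div_lt_one hsm]
      have : (Δ:ℝ) < s := by exact_mod_cast hs
      linarith
    have hDm : (0:ℝ) < (Δ : ℝ) - m := by
      have : (m:ℝ) < Δ := by exact_mod_cast (by omega : m < Δ)
      linarith
    nlinarith [hw, hratio, div_pos hDm hsm]
  · intro k hk2 hkΔ
    obtain ⟨p, rfl⟩ : ∃ p, k = p + 2 := ⟨k - 2, by omega⟩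
    have hp1 : p + 1 < Δ := by omega
    have hp2 : p + 2 ≤ Δ := by omega
    unfold zfun
    show 2 * ((Nat.choose Δ (p + 1) : ℝ) / (Nat.choose s (p + 1) : ℝ)) ≤
      (Nat.choose Δ p : ℝ) / (Nat.choose s p : ℝ) +
        (Nat.choose Δ (p + 2) : ℝ) / (Nat.choose s (p + 2) : ℝ)
    have r1 := wratio Δ s p (by omega) hs
    have r2 := wratio Δ s (p + 1) hp1 hs
    rw [r2, r1]
    set w : ℝ := (Nat.choose Δ p : ℝ) / (Nat.choose s p : ℝ) with hw
    have hwpos : 0 < w := wpos (by omega) hs.le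
    push_cast at r2 ⊢
    have hPD : (p:ℝ) + 2 ≤ (Δ:ℝ) := by exact_mod_cast hp2
    have hDS : (Δ:ℝ) + 1 ≤ (s:ℝ) := by
      have : Δ + 1 ≤ s := hs
      exact_mod_cast this
    set D := (Δ : ℝ) with hD
    set S := (s : ℝ) with hS
    set P := (p : ℝ) with hP
    have hSP : (0:ℝ) < S - P := by linarith
    have hSP1 : (0:ℝ) < S - (P + 1) := by linarith
    have key : 2 * ((D - P) / (S - P)) ≤
        1 + ((D - P) / (S - P)) * ((D - (P + 1)) / (S - (P + 1))) := by
      rw [div_mul_div_comm, ← sub_nonneg]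
      have h : 1 + (D - P) * (D - (P + 1)) / ((S - P) * (S - (P + 1)))
          - 2 * ((D - P) / (S - P))
          = ((S - D) * (S - D - 1)) / ((S - P) * (S - (P + 1))) := by
        field_simp
        ring
      rw [h]
      apply div_nonneg _ (by positivity)
      apply mul_nonneg <;> linarith
    nlinarith [mul_le_mul_of_nonneg_left key hwpos.le]
end

section
/- Let Δ, q, s be positive integers with q ≥ (7/3)Δ and Δ < s ≤ 2Δ (and s < q). Define r_3 = ((s + Δ − q)(s − 1)) / ((q − Δ)Δ). Then 0 ≤ r_3 ≤ 1 whenever s + Δ ≥ q; and setting z(k) = (Δ choose (k−1))/(s choose (k−1)), the two-point distribution r_2 = 1 − r_3, r_3 satisfies r_2·z(2) + r_3·z(3) ≤ (q−s)/(q−Δ). -/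
/-- feasibility of the Seeding coupling's size distribution. With
`q ≥ (7/3)Δ`, `Δ < s ≤ 2Δ`, `s < q` and `r₃ = (s+Δ−q)(s−1)/((q−Δ)Δ)`, we have
`0 ≤ r₃ ≤ 1` whenever `s + Δ ≥ q`, and the two-point distribution `(1−r₃, r₃)` on
sizes `{2,3}` satisfies the main LP constraint `r₂ z(2) + r₃ z(3) ≤ (q−s)/(q−Δ)`. -/
theorem stmt_7 (Δ q s : ℕ) (hΔ : 1 ≤ Δ) (hq7 : (7 : ℝ) / 3 * Δ ≤ q)
    (hΔs : Δ < s) (hs : s ≤ 2 * Δ) (hsq : s < q)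
    (r3 : ℝ) (hr3 : r3 = ((s : ℝ) + Δ - q) * ((s : ℝ) - 1) / (((q : ℝ) - Δ) * Δ)) :
    ((q ≤ s + Δ) → 0 ≤ r3 ∧ r3 ≤ 1) ∧
      (1 - r3) * zfun Δ s 2 + r3 * zfun Δ s 3 ≤ ((q : ℝ) - s) / ((q : ℝ) - Δ) := by
  have hD1 : (1 : ℝ) ≤ (Δ : ℝ) := by exact_mod_cast hΔ
  have hDS : (Δ : ℝ) < (s : ℝ) := by exact_mod_cast hΔs
  have hs2 : (2 : ℝ) ≤ (s : ℝ) := by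
    have : 2 ≤ s := by omega
    exact_mod_cast this
  have hsle : (s : ℝ) ≤ 2 * (Δ : ℝ) := by exact_mod_cast hs
  have hsqR : (s : ℝ) < (q : ℝ) := by exact_mod_cast hsq
  have hQD : (0 : ℝ) < (q : ℝ) - (Δ : ℝ) := by linarith
  have hDpos : (0 : ℝ) < (Δ : ℝ) := by linarith
  have hspos : (0 : ℝ) < (s : ℝ) := by linarith
  have hs1 : (0 : ℝ) < (s : ℝ) - 1 := by linarith
  constructor
  · intro h
    have hR : (q : ℝ) ≤ (s : ℝ) + (Δ : ℝ) := by exact_mod_cast h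
    constructor
    · rw [hr3]
      apply div_nonneg
      · nlinarith
      · nlinarith
    · rw [hr3, div_le_one (by positivity)]
      nlinarith [mul_pos hDpos hDpos]
  · have h2 : zfun Δ s 2 = (Δ : ℝ) / (s : ℝ) := by
      simp [zfun]
    have h3 : zfun Δ s 3 = (Δ : ℝ) * ((Δ : ℝ) - 1) / ((s : ℝ) * ((s : ℝ) - 1)) := by
      simp only [zfun]
      rw [show (3 : ℕ) - 1 = 2 from rfl, Nat.cast_choose_two, Nat.cast_choose_two]
      have h1 : ((s:ℝ)*((s:ℝ)-1)) ≠ 0 := by positivity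
      field_simp
    rw [h2, h3, hr3]
    apply le_of_eq
    field_simp
    ring
end

section
/- Let Δ ≥ 3 and set η = 2√((log Δ + 1)/Δ). For a graph G of maximum degree Δ, if each vertex is included in a set S independently with probability p₀ = 1/2 − η/2, then for each fixed vertex v, the probability that |Γ(v) ∩ S| > Δ/2 or |Γ(v) ∩ (V∖S)| > (1/2 + η)Δ is at most 2/(e²Δ²). -/
/-!
Each neighbour of `v` lands in `S` independently, so `|Γ(v) ∩ S|` and `|Γ(v) ∖ S|` are sums
of at most `Δ` independent `[0, 1]`-valued variables. Hoeffding's inequality bounds each of the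
two deviations `t = ηΔ/2` above the mean by `exp (-2t²/Δ) = exp (-2 (log Δ + 1)) = 1/(e²Δ²)`,
and a union bound gives the factor `2`.
-/

open MeasureTheory ProbabilityTheory Finset Real

lemma measureReal_sum_ge_le_of_iIndepFun_mem_Icc {Ω ι : Type*} {mΩ : MeasurableSpace Ω}
    {μ : Measure Ω} [IsProbabilityMeasure μ] {X : ι → Ω → ℝ} (h_indep : iIndepFun X μ)
    (hmeas : ∀ i, AEMeasurable (X i) μ) (hX : ∀ i, ∀ᵐ ω ∂μ, X i ω ∈ Set.Icc 0 1)
    (s : Finset ι) {t : ℝ} (ht : 0 ≤ t) :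
    μ.real {ω | ∑ i ∈ s, μ[X i] + t ≤ ∑ i ∈ s, X i ω} ≤ exp (-2 * t ^ 2 / #s) := by
  have h_indep' : iIndepFun (fun i ω ↦ X i ω - μ[X i]) μ :=
    h_indep.comp (fun i x ↦ x - ∫ ω, X i ω ∂μ) fun _ ↦ by fun_prop
  calc μ.real {ω | ∑ i ∈ s, μ[X i] + t ≤ ∑ i ∈ s, X i ω}
      = μ.real {ω | t ≤ ∑ i ∈ s, (X i ω - μ[X i])} := by
        simp only [sum_sub_distrib, le_sub_iff_add_le']
    _ ≤ _ := HasSubgaussianMGF.measure_sum_ge_le_of_iIndepFun h_indep'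
          (fun i _ ↦ hasSubgaussianMGF_of_mem_Icc (hmeas i) (hX i)) ht
    _ = exp (-2 * t ^ 2 / #s) := by
        congr 1
        simp [sum_const]
        ring

namespace PMF

variable {V α : Type*} [Fintype V] [MeasurableSpace α] [MeasurableSingletonClass α] (q : PMF α)

lemma pi_toMeasure_setOf_eval_eq (u : V) (a : α) :
    Measure.pi (fun _ : V ↦ q.toMeasure) {ω | ω u = a} = q a := by
  rw [← q.toMeasure_apply_singleton a (measurableSet_singleton a)]
  exact (measurePreserving_eval (fun _ : V ↦ q.toMeasure) u).measure_preimage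
    (measurableSet_singleton a).nullMeasurableSet

lemma ae_pi_toMeasure_ne {a : α} (ha : q a = 0) :
    ∀ᵐ ω ∂(Measure.pi fun _ : V ↦ q.toMeasure), ∀ u, ω u ≠ a := by
  rw [ae_all_iff]
  intro u
  simpa [ae_iff] using (q.pi_toMeasure_setOf_eval_eq u a).trans ha

variable [DecidableEq α]

lemma integral_pi_toMeasure_ite_eval_eq (u : V) (a : α) :
    ∫ ω, (if ω u = a then 1 else 0 : ℝ) ∂(Measure.pi fun _ : V ↦ q.toMeasure)
      = (q a).toReal := by
  rw [← q.pi_toMeasure_setOf_eval_eq u a, ← measureReal_def, ← integral_indicator_one]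
  · simp only [Set.indicator_apply, Set.mem_ofPred_eq, Pi.one_apply]
  · exact (measurableSet_singleton a).preimage (measurable_pi_apply u)

lemma measureReal_pi_lt_card_filter_le (N : Finset V) (a : α) {n : ℕ} (hN : #N ≤ n)
    {s t : ℝ} (ht : 0 < t) (hs : n * (q a).toReal + t ≤ s) :
    (Measure.pi fun _ : V ↦ q.toMeasure).real {ω | s < #{u ∈ N | ω u = a}}
      ≤ exp (-2 * t ^ 2 / n) := by
  have hNn : (#N : ℝ) ≤ n := by exact_mod_cast hN
  have h_event : {ω : V → α | s < #{u ∈ N | ω u = a}}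
      ⊆ {ω | #N * (q a).toReal + t ≤ #{u ∈ N | ω u = a}} := fun ω hω ↦ by
    simp only [Set.mem_ofPred_eq] at hω ⊢
    nlinarith [mul_le_mul_of_nonneg_right hNn (q a).toReal_nonneg]
  obtain hN0 | hN0 := Nat.eq_zero_or_pos #N
  · have : {ω : V → α | #N * (q a).toReal + t ≤ #{u ∈ N | ω u = a}} = ∅ := by
      ext ω
      simp [card_eq_zero.mp hN0, ht]
    rw [Set.subset_empty_iff.mp (h_event.trans this.subset), measureReal_empty]
    positivity
  have h_indep : iIndepFun (fun u (ω : V → α) ↦ if ω u = a then (1 : ℝ) else 0)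
      (Measure.pi fun _ : V ↦ q.toMeasure) :=
    iIndepFun_pi (X := fun _ x ↦ if x = a then (1 : ℝ) else 0) fun _ ↦
      (measurable_const.ite (measurableSet_singleton a) measurable_const).aemeasurable
  have hHoeffding := measureReal_sum_ge_le_of_iIndepFun_mem_Icc h_indep
    (fun u ↦ (measurable_const.ite ((measurableSet_singleton a).preimage (measurable_pi_apply u))
      measurable_const).aemeasurable)
    (fun u ↦ ae_of_all _ fun ω ↦ by split_ifs <;> simp) N ht.le
  simp only [q.integral_pi_toMeasure_ite_eval_eq, sum_const, nsmul_eq_mul, sum_boole]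
    at hHoeffding
  refine (measureReal_mono h_event).trans (hHoeffding.trans (exp_le_exp.mpr ?_))
  have : (0 : ℝ) < #N := by exact_mod_cast hN0
  rw [neg_mul, neg_div, neg_div, neg_le_neg_iff]
  gcongr

lemma measureReal_pi_lt_card_filter_eq_zero (N : Finset V) {a : α} (ha : (q a).toReal = 0)
    {s : ℝ} (hs : 0 ≤ s) :
    (Measure.pi fun _ : V ↦ q.toMeasure).real {ω | s < #{u ∈ N | ω u = a}} = 0 := by
  have ha' : q a = 0 := (ENNReal.toReal_eq_zero_iff _).mp ha |>.resolve_right (q.apply_ne_top a)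
  rw [measureReal_def, measure_eq_zero_iff_ae_notMem.mpr, ENNReal.toReal_zero]
  filter_upwards [q.ae_pi_toMeasure_ne ha'] with ω hω
  simpa [hω] using hs

lemma toReal_bernoulli_true {p : NNReal} (h : p ≤ 1) : (bernoulli p h true).toReal = p := by
  rw [bernoulli_apply]
  rfl

lemma toReal_bernoulli_false {p : NNReal} (h : p ≤ 1) : (bernoulli p h false).toReal = 1 - p := by
  rw [bernoulli_apply, Bool.cond_false, ENNReal.coe_toReal, NNReal.coe_sub h, NNReal.coe_one]

end PMF

lemma exp_neg_two_mul_sq_div_eq {d η : ℝ} (hd : 1 ≤ d) (hη : η = 2 * √((log d + 1) / d)) :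
    exp (-2 * (η * d / 2) ^ 2 / d) = 1 / (exp 2 * d ^ 2) := by
  have hd0 : 0 < d := by linarith
  have hηsq : η ^ 2 * d = 4 * (log d + 1) := by
    rw [hη, mul_pow, sq_sqrt (div_nonneg (by linarith [log_nonneg hd]) hd0.le)]
    field_simp
    ring
  have : -2 * (η * d / 2) ^ 2 / d = -(2 + log (d ^ 2)) := by
    rw [log_pow, div_eq_iff hd0.ne']
    push_cast
    linear_combination (-d / 2) * hηsq
  rw [this, exp_neg, exp_add, exp_log (by positivity), one_div]

/-- Chernoff bound for the random vertex partition. With `Δ ≥ 3`,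
`η = 2√((log Δ + 1)/Δ)` and each vertex included in `S` independently with probability
`p₀ = 1/2 − η/2`, the probability that a fixed vertex `v` has `|Γ(v) ∩ S| > Δ/2` or
`|Γ(v) ∖ S| > (1/2 + η)Δ` is at most `2/(e²Δ²)`. -/
theorem stmt_10 {V : Type*} [Fintype V]
    (G : SimpleGraph V) [DecidableRel G.Adj]
    (Δ : ℕ) (hΔ : 3 ≤ Δ) (hdeg : ∀ v : V, G.degree v ≤ Δ)
    (η : ℝ) (hη : η = 2 * Real.sqrt ((Real.log Δ + 1) / Δ))
    (hp : ENNReal.ofReal (1 / 2 - η / 2) ≤ 1) (v : V) :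
    ((Measure.pi fun _ : V => (PMF.bernoulli (ENNReal.ofReal (1 / 2 - η / 2)).toNNReal (le_trans (ENNReal.toNNReal_mono ENNReal.one_ne_top hp) (by simp))).toMeasure)
        {ω : V → Bool |
          ((Δ : ℝ) / 2 < (((G.neighborFinset v).filter fun u => ω u = true).card : ℝ)) ∨
          ((1 / 2 + η) * Δ < (((G.neighborFinset v).filter fun u => ω u = false).card : ℝ))}
      ).toReal ≤ 2 / (Real.exp 2 * (Δ : ℝ) ^ 2) := by
  have hp₁ : (ENNReal.ofReal (1 / 2 - η / 2)).toNNReal ≤ 1 :=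
    (ENNReal.toNNReal_mono ENNReal.one_ne_top hp).trans_eq ENNReal.toNNReal_one
  set q := PMF.bernoulli _ hp₁
  set μ := Measure.pi fun _ : V ↦ q.toMeasure
  have hp_val : ((ENNReal.ofReal (1 / 2 - η / 2)).toNNReal : ℝ) = max (1 / 2 - η / 2) 0 := rfl
  have hN : #(G.neighborFinset v) ≤ Δ := (G.card_neighborFinset_eq_degree v).trans_le (hdeg v)
  have hΔ1 : (1 : ℝ) ≤ Δ := Nat.one_le_cast.mpr (by omega)
  have hη0 : 0 < η := by
    rw [hη]
    have := log_nonneg hΔ1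
    positivity
  set t := η * Δ / 2 with ht_def
  have ht : 0 < t := by positivity
  have h_true : μ.real {ω | (Δ : ℝ) / 2 < #{u ∈ G.neighborFinset v | ω u = true}}
      ≤ exp (-2 * t ^ 2 / Δ) := by
    rcases le_or_gt η 1 with hη1 | hη1
    · refine q.measureReal_pi_lt_card_filter_le _ true hN ht (le_of_eq ?_)
      rw [PMF.toReal_bernoulli_true, hp_val, max_eq_left (by linarith)]
      ring
    · -- for small `Δ` the probability `1/2 - η/2` is negative and is clamped to `0`
      have hq₀ : (q true).toReal = 0 := by
        rw [PMF.toReal_bernoulli_true, hp_val, max_eq_right (by linarith)]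
      rw [q.measureReal_pi_lt_card_filter_eq_zero _ hq₀ (by positivity)]
      positivity
  have h_false : μ.real {ω | (1 / 2 + η) * Δ < #{u ∈ G.neighborFinset v | ω u = false}}
      ≤ exp (-2 * t ^ 2 / Δ) := by
    refine q.measureReal_pi_lt_card_filter_le _ false hN ht ?_
    have : 1 - max (1 / 2 - η / 2) 0 ≤ 1 / 2 + η / 2 := by
      linarith [le_max_left (1 / 2 - η / 2) 0]
    rw [PMF.toReal_bernoulli_false, hp_val]
    linarith [mul_le_mul_of_nonneg_left this (by positivity : (0 : ℝ) ≤ Δ)]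
  calc _ ≤ _ := measureReal_union_le _ _
    _ ≤ _ := add_le_add h_true h_false
    _ = 2 / (exp 2 * Δ ^ 2) := by rw [ht_def, exp_neg_two_mul_sq_div_eq hΔ1 hη]; ring
end

section
/- Fix integers q > Δ ≥ 1 and a set A ⊆ [q] with |A| = Δ. Let π be a uniformly random permutation of A, let x' be uniform on [q]∖A, and let U' be uniform on [0,1], all independent. For a fixed set Γ ⊆ [q] with |Γ| ≤ Δ and |A∖Γ| ≥ 1, define the output X = x' if x' ∉ Γ and U' ≤ (q−Δ)/(q−|Γ|); otherwise X = the first element of π not in Γ (which exists since |A∖Γ| ≥ 1). Then X is uniformly distributed on [q]∖Γ. -/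
open scoped ENNReal

lemma findAvail_mem (A Γ : Finset ℕ) (hAΓ : ¬ A ⊆ Γ) {l : List ℕ}
    (hl : l ∈ (A.sort (· ≤ ·)).permutations.toFinset) :
    ((l.find? fun a => decide (a ∉ Γ)).getD 0) ∈ A \ Γ := by
  have hlp : l.Perm (A.sort (· ≤ ·)) := List.mem_permutations.mp (List.mem_toFinset.mp hl)
  have hmem : ∀ x, x ∈ l ↔ x ∈ A := fun x => (hlp.mem_iff).trans (Finset.mem_sort _)
  obtain ⟨a, haA, haΓ⟩ := Finset.not_subset.mp hAΓ
  have hsome : (l.find? fun a => decide (a ∉ Γ)).isSome := by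
    rw [List.find?_isSome]
    exact ⟨a, (hmem a).mpr haA, by simpa using haΓ⟩
  obtain ⟨b, hb⟩ := Option.isSome_iff_exists.mp hsome
  have hbl := List.mem_of_find?_eq_some hb
  have hbp := List.find?_some hb
  simp only [hb, Option.getD_some, Finset.mem_sdiff]
  exact ⟨(hmem b).mp hbl, by simpa using hbp⟩

lemma find_eq_some_of_getD (A Γ : Finset ℕ) (hAΓ : ¬ A ⊆ Γ) {l : List ℕ} {y : ℕ}
    (hl : l ∈ (A.sort (· ≤ ·)).permutations.toFinset)
    (hy : (l.find? fun a => decide (a ∉ Γ)).getD 0 = y) :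
    l.find? (fun a => decide (a ∉ Γ)) = some y := by
  have hlp : l.Perm (A.sort (· ≤ ·)) := List.mem_permutations.mp (List.mem_toFinset.mp hl)
  have hmem : ∀ x, x ∈ l ↔ x ∈ A := fun x => (hlp.mem_iff).trans (Finset.mem_sort _)
  obtain ⟨a, haA, haΓ⟩ := Finset.not_subset.mp hAΓ
  have hsome : (l.find? fun a => decide (a ∉ Γ)).isSome := by
    rw [List.find?_isSome]
    exact ⟨a, (hmem a).mpr haA, by simpa using haΓ⟩
  obtain ⟨b, hb⟩ := Option.isSome_iff_exists.mp hsome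
  rw [hb]; rw [hb] at hy; simpa using hy

lemma fiber_card_eq (A Γ : Finset ℕ) (hAΓ : ¬ A ⊆ Γ) {y z : ℕ}
    (hy : y ∈ A \ Γ) (hz : z ∈ A \ Γ) :
    ((A.sort (· ≤ ·)).permutations.toFinset.filter
      (fun l => (l.find? fun a => decide (a ∉ Γ)).getD 0 = y)).card =
    ((A.sort (· ≤ ·)).permutations.toFinset.filter
      (fun l => (l.find? fun a => decide (a ∉ Γ)).getD 0 = z)).card := by
  set L := A.sort (· ≤ ·) with hL
  set σ := Equiv.swap y z with hσ
  obtain ⟨hyA, hyΓ⟩ := Finset.mem_sdiff.mp hy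
  obtain ⟨hzA, hzΓ⟩ := Finset.mem_sdiff.mp hz
  have hpσ : ∀ a : ℕ, (decide (σ a ∉ Γ) : Bool) = decide (a ∉ Γ) := by
    intro a
    by_cases h1 : a = y
    · subst h1; simp [hσ, Equiv.swap_apply_left, hyΓ, hzΓ]
    by_cases h2 : a = z
    · subst h2; simp [hσ, Equiv.swap_apply_right, hyΓ, hzΓ]
    · rw [hσ, Equiv.swap_apply_of_ne_of_ne h1 h2]
  have hmemσ : ∀ a : ℕ, σ a ∈ L ↔ a ∈ L := by
    intro a
    by_cases h1 : a = y
    · subst h1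
      simp only [hσ, Equiv.swap_apply_left, hL, Finset.mem_sort]
      exact iff_of_true hzA hyA
    by_cases h2 : a = z
    · subst h2
      simp only [hσ, Equiv.swap_apply_right, hL, Finset.mem_sort]
      exact iff_of_true hyA hzA
    · rw [hσ, Equiv.swap_apply_of_ne_of_ne h1 h2]
  have hLnd : L.Nodup := A.sort_nodup _
  have hLσ : (L.map σ).Perm L := by
    rw [List.perm_iff_count]
    intro a
    have h1 : List.count a (L.map σ) = List.count (σ.symm a) L := by
      conv_lhs => rw [show a = σ (σ.symm a) by simp]
      exact List.count_map_of_injective L σ σ.injective (σ.symm a)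
    rw [h1]
    have hmm : σ.symm a ∈ L ↔ a ∈ L := by
      have h2 := hmemσ (σ.symm a)
      rw [Equiv.apply_symm_apply] at h2
      exact h2.symm
    by_cases h : a ∈ L
    · rw [List.count_eq_one_of_mem hLnd h,
        List.count_eq_one_of_mem hLnd (hmm.mpr h)]
    · rw [List.count_eq_zero_of_not_mem h,
        List.count_eq_zero_of_not_mem (fun hh => h (hmm.mp hh))]
  have hmapP : ∀ l : List ℕ, l ∈ L.permutations.toFinset →
      l.map σ ∈ L.permutations.toFinset := by
    intro l hl
    have hlp : l.Perm L := List.mem_permutations.mp (List.mem_toFinset.mp hl)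
    exact List.mem_toFinset.mpr (List.mem_permutations.mpr ((hlp.map σ).trans hLσ))
  have hFmap : ∀ (l : List ℕ) (w : ℕ), l ∈ L.permutations.toFinset →
      (l.find? fun a => decide (a ∉ Γ)).getD 0 = w → w ∈ A \ Γ →
      ((l.map σ).find? fun a => decide (a ∉ Γ)).getD 0 = σ w := by
    intro l w hl hw _
    have hfs : l.find? (fun a => decide (a ∉ Γ)) = some w :=
      find_eq_some_of_getD A Γ hAΓ hl hw
    have : ((fun a => decide (a ∉ Γ)) ∘ σ) = fun a => decide (a ∉ Γ) :=
      funext fun a => hpσ a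
    rw [List.find?_map, this, hfs]
    rfl
  have hinv : ∀ l : List ℕ, (l.map σ).map σ = l := by
    intro l
    rw [List.map_map]
    have : (⇑σ ∘ ⇑σ) = id := funext fun a => by rw [hσ]; exact Equiv.swap_apply_self _ _ _
    rw [this, List.map_id]
  refine Finset.card_bij' (fun l _ => l.map σ) (fun l _ => l.map σ) ?_ ?_ ?_ ?_
  · intro l hl
    obtain ⟨hlP, hlF⟩ := Finset.mem_filter.mp hl
    refine Finset.mem_filter.mpr ⟨hmapP l hlP, ?_⟩
    rw [hFmap l y hlP hlF hy, hσ, Equiv.swap_apply_left]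
  · intro l hl
    obtain ⟨hlP, hlF⟩ := Finset.mem_filter.mp hl
    refine Finset.mem_filter.mpr ⟨hmapP l hlP, ?_⟩
    rw [hFmap l z hlP hlF hz, hσ, Equiv.swap_apply_right]
  · intro l _; exact hinv l
  · intro l _; exact hinv l

lemma fiber_card_mul (A Γ : Finset ℕ) (hAΓ : ¬ A ⊆ Γ) {y : ℕ} (hy : y ∈ A \ Γ) :
    ((A.sort (· ≤ ·)).permutations.toFinset.filter
      (fun l => (l.find? fun a => decide (a ∉ Γ)).getD 0 = y)).card * (A \ Γ).card =
    (A.sort (· ≤ ·)).permutations.toFinset.card := by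
  rw [Finset.card_eq_sum_card_fiberwise
      (f := fun l => (l.find? fun a => decide (a ∉ Γ)).getD 0) (t := A \ Γ)
      (fun l hl => findAvail_mem A Γ hAΓ hl)]
  rw [Finset.sum_congr rfl (fun z hz => fiber_card_eq A Γ hAΓ hz hy)]
  rw [Finset.sum_const, smul_eq_mul, mul_comm]

lemma ennreal_inv_mul_cancel_mul {a b : ℝ≥0∞} (h0 : a ≠ 0) (ht : a ≠ ⊤) :
    a⁻¹ * (a * b) = b := by
  rw [← mul_assoc, ENNReal.inv_mul_cancel h0 ht, one_mul]

open MeasureTheory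

/-- Equip `List ℕ` (the space of orderings of `A`) with the discrete σ-algebra. -/
instance : MeasurableSpace (List ℕ) := ⊤

/-- marginal correctness of the Compress coupling. With `A ⊆ [q]`,
`|A| = Δ`, a fixed `Γ ⊆ [q]` with `|Γ| ≤ Δ` and `A ⊄ Γ`, sample independently a uniform
permutation (ordering) of `A`, a uniform `x' ∈ [q] ∖ A` and a uniform `U' ∈ [0,1]`;
output `x'` if `x' ∉ Γ` and `U' ≤ (q−Δ)/(q−|Γ|)`, and otherwise the first element of the
random ordering of `A` not in `Γ`. The output is uniformly distributed on `[q] ∖ Γ`. -/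
theorem stmt_16 (q Δ : ℕ) (hΔ : 1 ≤ Δ) (hq : Δ < q)
    (A Γ : Finset ℕ) (hAq : A ⊆ Finset.Icc 1 q) (hAcard : A.card = Δ)
    (hΓq : Γ ⊆ Finset.Icc 1 q) (hΓcard : Γ.card ≤ Δ) (hAΓ : ¬ A ⊆ Γ)
    (hπne : ((A.sort (· ≤ ·)).permutations.toFinset).Nonempty)
    (hxne : (Finset.Icc 1 q \ A).Nonempty)
    (hne : (Finset.Icc 1 q \ Γ).Nonempty) :
    Measure.map
      (fun ω : List ℕ × ℕ × ℝ =>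
        if ω.2.1 ∉ Γ ∧ ω.2.2 ≤ ((q : ℝ) - Δ) / ((q : ℝ) - Γ.card) then ω.2.1
        else ((ω.1.find? fun a => decide (a ∉ Γ)).getD 0))
      (((PMF.uniformOfFinset ((A.sort (· ≤ ·)).permutations.toFinset) hπne).toMeasure).prod
        (((PMF.uniformOfFinset (Finset.Icc 1 q \ A) hxne).toMeasure).prod
          (volume.restrict (Set.Icc (0 : ℝ) 1))))
      = (PMF.uniformOfFinset (Finset.Icc 1 q \ Γ) hne).toMeasure := by
  classical
  haveI : IsProbabilityMeasure (volume.restrict (Set.Icc (0:ℝ) 1)) :=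
    ⟨by simp [Real.volume_Icc]⟩
  set c : ℝ := ((q : ℝ) - Δ) / ((q : ℝ) - Γ.card) with hc
  set P := (A.sort (· ≤ ·)).permutations.toFinset with hP
  set m1 := (PMF.uniformOfFinset P hπne).toMeasure with hm1
  set m2 := (PMF.uniformOfFinset (Finset.Icc 1 q \ A) hxne).toMeasure with hm2
  set m3 := volume.restrict (Set.Icc (0:ℝ) 1) with hm3
  -- numeric facts
  have hkq : Γ.card < q := lt_of_le_of_lt hΓcard hq
  have hqR : (0:ℝ) < (q:ℝ) - Γ.card := by
    have : (Γ.card : ℝ) < q := by exact_mod_cast hkq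
    linarith
  have hrR : (0:ℝ) < (q:ℝ) - Δ := by
    have : (Δ : ℝ) < q := by exact_mod_cast hq
    linarith
  have hc0 : 0 ≤ c := le_of_lt (div_pos hrR hqR)
  have hc1 : c ≤ 1 := by
    rw [hc, div_le_one hqR]
    have : (Γ.card : ℝ) ≤ Δ := by exact_mod_cast hΓcard
    linarith
  have hcardIcc : (Finset.Icc 1 q).card = q := by rw [Nat.card_Icc]; omega
  set r := (Finset.Icc 1 q \ A).card with hr
  set s := (Finset.Icc 1 q \ Γ).card with hs
  set t := ((Finset.Icc 1 q \ A) \ Γ).card with ht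
  set m := (A \ Γ).card with hm
  have hrval : r = q - Δ := by rw [hr, Finset.card_sdiff_of_subset hAq, hcardIcc, hAcard]
  have hsval : s = q - Γ.card := by rw [hs, Finset.card_sdiff_of_subset hΓq, hcardIcc]
  have hts : t + m = s := by
    have hdisj : Disjoint ((Finset.Icc 1 q \ A) \ Γ) (A \ Γ) := by
      rw [Finset.disjoint_left]
      intro x hx1 hx2
      exact (Finset.mem_sdiff.mp (Finset.mem_sdiff.mp hx1).1).2 (Finset.mem_sdiff.mp hx2).1
    have hunion : ((Finset.Icc 1 q \ A) \ Γ) ∪ (A \ Γ) = Finset.Icc 1 q \ Γ := by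
      ext x
      have hx := @hAq x
      simp only [Finset.mem_union, Finset.mem_sdiff]
      tauto
    rw [ht, hm, ← Finset.card_union_of_disjoint hdisj, hunion, hs]
  have hm0 : m ≠ 0 := by
    obtain ⟨a, haA, haΓ⟩ := Finset.not_subset.mp hAΓ
    exact Finset.card_ne_zero_of_mem (Finset.mem_sdiff.mpr ⟨haA, haΓ⟩)
  have hs0 : s ≠ 0 := Finset.card_ne_zero_of_mem hne.choose_spec
  have hr0 : r ≠ 0 := Finset.card_ne_zero_of_mem hxne.choose_spec
  have hPc0 : P.card ≠ 0 := Finset.card_ne_zero_of_mem hπne.choose_spec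
  have hr0' : (r : ℝ≥0∞) ≠ 0 := Nat.cast_ne_zero.mpr hr0
  have hs0' : (s : ℝ≥0∞) ≠ 0 := Nat.cast_ne_zero.mpr hs0
  have hm0' : (m : ℝ≥0∞) ≠ 0 := Nat.cast_ne_zero.mpr hm0
  have hofc : ENNReal.ofReal c = (r : ℝ≥0∞) / s := by
    have h1 : ((q:ℝ) - Δ) = (r : ℝ) := by rw [hrval, Nat.cast_sub hq.le]
    have h2 : ((q:ℝ) - Γ.card) = (s : ℝ) := by rw [hsval, Nat.cast_sub hkq.le]
    rw [hc, ENNReal.ofReal_div_of_pos hqR, h1, h2, ENNReal.ofReal_natCast,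
      ENNReal.ofReal_natCast]
  -- measurability
  have hsetN : ∀ S : Set ℕ, MeasurableSet S := fun _ => trivial
  have hsetL : ∀ S : Set (List ℕ), MeasurableSet S := fun _ => trivial
  have hfmeas : Measurable (fun ω : List ℕ × ℕ × ℝ =>
      if ω.2.1 ∉ Γ ∧ ω.2.2 ≤ c then ω.2.1
      else ((ω.1.find? fun a => decide (a ∉ Γ)).getD 0)) := by
    apply Measurable.ite
    · exact MeasurableSet.inter
        ((measurable_fst.comp measurable_snd) (hsetN {x : ℕ | x ∉ Γ}))
        ((measurable_snd.comp measurable_snd) measurableSet_Iic)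
    · exact measurable_fst.comp measurable_snd
    · exact (measurable_from_top
        (f := fun l : List ℕ => (List.find? (fun a => decide (a ∉ Γ)) l).getD 0)).comp
        measurable_fst
  have hm3Iic : m3 (Set.Iic c) = ENNReal.ofReal c := by
    rw [hm3, Measure.restrict_apply measurableSet_Iic]
    have heq : Set.Iic c ∩ Set.Icc 0 1 = Set.Icc 0 c := by
      ext u; simp only [Set.mem_inter_iff, Set.mem_Iic, Set.mem_Icc]
      constructor
      · rintro ⟨h1', h2', _⟩; exact ⟨h2', h1'⟩
      · rintro ⟨h1', h2'⟩; exact ⟨h2', h1', le_trans h2' hc1⟩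
    rw [heq, Real.volume_Icc, sub_zero]
  have hm1fil : ∀ S : Set (List ℕ), m1 S = ((P.filter (fun l => l ∈ S)).card : ℝ≥0∞) / P.card := by
    intro S
    rw [hm1, PMF.toMeasure_uniformOfFinset_apply _ _ (hsetL _)]
  have hm2fil : ∀ S : Set ℕ, m2 S =
      (((Finset.Icc 1 q \ A).filter (fun x => x ∈ S)).card : ℝ≥0∞) / r := by
    intro S
    rw [hm2, PMF.toMeasure_uniformOfFinset_apply _ _ (hsetN _), hr]
  set T : Set (ℕ × ℝ) := {x : ℕ | x ∉ Γ} ×ˢ Set.Iic c with hT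
  have hTm : MeasurableSet T := (hsetN {x : ℕ | x ∉ Γ}).prod measurableSet_Iic
  have hTcompl : (m2.prod m3) Tᶜ = (m : ℝ≥0∞) / s := by
    have hTmeasure : (m2.prod m3) T = (t : ℝ≥0∞) / r * ENNReal.ofReal c := by
      rw [hT, Measure.prod_prod, hm3Iic, hm2fil]
      rw [Finset.filter_congr_decidable]
      have hfilt : (Finset.Icc 1 q \ A).filter (fun x => x ∈ {x : ℕ | x ∉ Γ})
          = (Finset.Icc 1 q \ A) \ Γ := by
        ext x
        simp only [Finset.mem_filter, Set.mem_setOf_eq, Finset.mem_sdiff]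
        all_goals tauto
      rw [hfilt, ← ht]
    rw [prob_compl_eq_one_sub hTm, hTmeasure, hofc]
    have e1 : (t : ℝ≥0∞) / r * ((r:ℝ≥0∞)/s) = (t:ℝ≥0∞)/s := by
      rw [div_eq_mul_inv, div_eq_mul_inv, div_eq_mul_inv, mul_assoc]
      congr 1
      exact ennreal_inv_mul_cancel_mul hr0' (ENNReal.natCast_ne_top r)
    rw [e1]
    refine ENNReal.sub_eq_of_eq_add ?_ ?_
    · simp [ENNReal.div_eq_top, hs0, hs0']
    · rw [ENNReal.div_add_div_same, ← Nat.cast_add, Nat.add_comm, hts,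
        ENNReal.div_self hs0' (ENNReal.natCast_ne_top s)]
  rw [Measure.ext_iff_singleton]
  intro y
  rw [Measure.map_apply hfmeas (measurableSet_singleton y)]
  have hpre : (fun ω : List ℕ × ℕ × ℝ =>
      if ω.2.1 ∉ Γ ∧ ω.2.2 ≤ c then ω.2.1
      else ((ω.1.find? fun a => decide (a ∉ Γ)).getD 0)) ⁻¹' {y}
      = (Set.univ ×ˢ ({x : ℕ | x = y ∧ x ∉ Γ} ×ˢ Set.Iic c)) ∪
        ({l : List ℕ | (l.find? fun a => decide (a ∉ Γ)).getD 0 = y} ×ˢ Tᶜ) := by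
    ext ω
    by_cases h : ω.2.1 ∉ Γ ∧ ω.2.2 ≤ c
    · simp only [Set.mem_preimage, Set.mem_singleton_iff, if_pos h, Set.mem_union,
        Set.mem_prod, Set.mem_univ, true_and, Set.mem_setOf_eq, Set.mem_compl_iff,
        Set.mem_Iic, hT]
      tauto
    · simp only [Set.mem_preimage, Set.mem_singleton_iff, if_neg h, Set.mem_union,
        Set.mem_prod, Set.mem_univ, true_and, Set.mem_setOf_eq, Set.mem_compl_iff,
        Set.mem_Iic, hT]
      tauto
  rw [hpre]
  have hdisj : Disjoint (Set.univ ×ˢ ({x : ℕ | x = y ∧ x ∉ Γ} ×ˢ Set.Iic c))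
      ({l : List ℕ | (l.find? fun a => decide (a ∉ Γ)).getD 0 = y} ×ˢ Tᶜ) := by
    rw [Set.disjoint_left]
    rintro ω ⟨-, ⟨hx, hu⟩⟩ ⟨-, hcomp⟩
    exact hcomp ⟨hx.2, hu⟩
  have hmeas2 : MeasurableSet
      ({l : List ℕ | (l.find? fun a => decide (a ∉ Γ)).getD 0 = y} ×ˢ Tᶜ) :=
    (hsetL {l : List ℕ | (l.find? fun a => decide (a ∉ Γ)).getD 0 = y}).prod hTm.compl
  rw [measure_union hdisj hmeas2]
  have h1 : (m1.prod (m2.prod m3)) (Set.univ ×ˢ ({x : ℕ | x = y ∧ x ∉ Γ} ×ˢ Set.Iic c))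
      = m2 {x : ℕ | x = y ∧ x ∉ Γ} * ((r : ℝ≥0∞) / s) := by
    rw [Measure.prod_prod, Measure.prod_prod, measure_univ, one_mul, hm3Iic, hofc]
  have h2 : (m1.prod (m2.prod m3))
      ({l : List ℕ | (l.find? fun a => decide (a ∉ Γ)).getD 0 = y} ×ˢ Tᶜ)
      = m1 {l : List ℕ | (l.find? fun a => decide (a ∉ Γ)).getD 0 = y} * ((m : ℝ≥0∞) / s) := by
    rw [Measure.prod_prod, hTcompl]
  rw [h1, h2]
  rw [PMF.toMeasure_apply_singleton _ y (measurableSet_singleton y),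
    PMF.uniformOfFinset_apply, ← hs]
  by_cases hyb : y ∈ Finset.Icc 1 q \ Γ
  · obtain ⟨hyq, hyΓ⟩ := Finset.mem_sdiff.mp hyb
    rw [if_pos hyb]
    by_cases hyA : y ∈ A
    · -- y ∈ A \ Γ : the permutation branch contributes
      have hyAΓ : y ∈ A \ Γ := Finset.mem_sdiff.mpr ⟨hyA, hyΓ⟩
      have hv2 : m2 {x : ℕ | x = y ∧ x ∉ Γ} = 0 := by
        have hset : {x : ℕ | x = y ∧ x ∉ Γ} = ({y} : Set ℕ) := by
          ext x
          simp only [Set.mem_setOf_eq, Set.mem_singleton_iff]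
          exact ⟨fun h => h.1, fun h => ⟨h, h ▸ hyΓ⟩⟩
        rw [hset, hm2, PMF.toMeasure_apply_singleton _ y (measurableSet_singleton y),
          PMF.uniformOfFinset_apply, if_neg]
        intro hmem
        exact (Finset.mem_sdiff.mp hmem).2 hyA
      have hfil : P.filter
          (fun l => l ∈ {l : List ℕ | (l.find? fun a => decide (a ∉ Γ)).getD 0 = y})
          = P.filter (fun l => (l.find? fun a => decide (a ∉ Γ)).getD 0 = y) := by
        ext l
        simp only [Finset.mem_filter, Set.mem_setOf_eq]
      have hcount := fiber_card_mul A Γ hAΓ hyAΓ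
      set N := (P.filter (fun l => (l.find? fun a => decide (a ∉ Γ)).getD 0 = y)).card with hN
      have hN0 : N ≠ 0 := by
        intro h
        rw [h, zero_mul] at hcount
        exact hPc0 hcount.symm
      have hN0' : (N : ℝ≥0∞) ≠ 0 := Nat.cast_ne_zero.mpr hN0
      have hv1 : m1 {l : List ℕ | (l.find? fun a => decide (a ∉ Γ)).getD 0 = y}
          = 1 / m := by
        rw [hm1fil]
        rw [Finset.filter_congr_decidable]
        rw [hfil, ← hN, ← hcount, Nat.cast_mul]
        calc (N : ℝ≥0∞) / ((N : ℝ≥0∞) * m) = ((N : ℝ≥0∞) * 1) / ((N : ℝ≥0∞) * m) := by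
              rw [mul_one]
          _ = 1 / m := ENNReal.mul_div_mul_left _ _ hN0' (ENNReal.natCast_ne_top N)
      rw [hv1, hv2, zero_mul, zero_add, one_div, div_eq_mul_inv,
        ennreal_inv_mul_cancel_mul hm0' (ENNReal.natCast_ne_top m)]
    · -- y ∉ A : the direct branch contributes
      have hv2 : m2 {x : ℕ | x = y ∧ x ∉ Γ} = ((r : ℝ≥0∞))⁻¹ := by
        have hset : {x : ℕ | x = y ∧ x ∉ Γ} = ({y} : Set ℕ) := by
          ext x
          simp only [Set.mem_setOf_eq, Set.mem_singleton_iff]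
          exact ⟨fun h => h.1, fun h => ⟨h, h ▸ hyΓ⟩⟩
        rw [hset, hm2, PMF.toMeasure_apply_singleton _ y (measurableSet_singleton y),
          PMF.uniformOfFinset_apply, if_pos (Finset.mem_sdiff.mpr ⟨hyq, hyA⟩), hr]
      have hv1 : m1 {l : List ℕ | (l.find? fun a => decide (a ∉ Γ)).getD 0 = y} = 0 := by
        rw [hm1fil]
        rw [Finset.filter_congr_decidable]
        have hfil : P.filter
            (fun l => l ∈ {l : List ℕ | (l.find? fun a => decide (a ∉ Γ)).getD 0 = y}) = ∅ := by
          rw [Finset.filter_eq_empty_iff]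
          intro l hl hmem
          rw [Set.mem_setOf_eq] at hmem
          exact hyA (Finset.mem_sdiff.mp (hmem ▸ findAvail_mem A Γ hAΓ hl)).1
        rw [hfil, Finset.card_empty, Nat.cast_zero, ENNReal.zero_div]
      rw [hv1, hv2, zero_mul, add_zero, div_eq_mul_inv,
        ennreal_inv_mul_cancel_mul hr0' (ENNReal.natCast_ne_top r)]
  · -- y ∉ [q] \ Γ : everything vanishes
    rw [if_neg hyb]
    have hv2 : m2 {x : ℕ | x = y ∧ x ∉ Γ} = 0 := by
      by_cases hyΓ : y ∈ Γ
      · have hset : {x : ℕ | x = y ∧ x ∉ Γ} = (∅ : Set ℕ) := by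
          ext x
          simp only [Set.mem_setOf_eq, Set.mem_empty_iff_false, iff_false, not_and]
          rintro rfl
          exact fun h => h hyΓ
        rw [hset, measure_empty]
      · have hset : {x : ℕ | x = y ∧ x ∉ Γ} = ({y} : Set ℕ) := by
          ext x
          simp only [Set.mem_setOf_eq, Set.mem_singleton_iff]
          exact ⟨fun h => h.1, fun h => ⟨h, h ▸ hyΓ⟩⟩
        rw [hset, hm2, PMF.toMeasure_apply_singleton _ y (measurableSet_singleton y),
          PMF.uniformOfFinset_apply, if_neg]
        intro hmem
        exact hyb (Finset.mem_sdiff.mpr ⟨(Finset.mem_sdiff.mp hmem).1, hyΓ⟩)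
    have hv1 : m1 {l : List ℕ | (l.find? fun a => decide (a ∉ Γ)).getD 0 = y} = 0 := by
      rw [hm1fil]
      rw [Finset.filter_congr_decidable]
      have hfil : P.filter
          (fun l => l ∈ {l : List ℕ | (l.find? fun a => decide (a ∉ Γ)).getD 0 = y}) = ∅ := by
        rw [Finset.filter_eq_empty_iff]
        intro l hl hmem
        rw [Set.mem_setOf_eq] at hmem
        have hmemAΓ := findAvail_mem A Γ hAΓ hl
        rw [hmem] at hmemAΓ
        obtain ⟨hyA', hyΓ'⟩ := Finset.mem_sdiff.mp hmemAΓ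
        exact hyb (Finset.mem_sdiff.mpr ⟨hAq hyA', hyΓ'⟩)
      rw [hfil, Finset.card_empty, Nat.cast_zero, ENNReal.zero_div]
    rw [hv1, hv2, zero_mul, zero_mul, add_zero]
end
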